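/- Let (A, A⁺) be a local pair. Let a be a proper ideal of A (so that a ⊆ m ⊆ A⁺, and a is in particular an ideal of A⁺), and let M⁺ be an A⁺-module such that M⁺ ⊗_{A⁺} A is a flat A-module. Then Tor₁^{A⁺}(M⁺, A⁺/a) = 0; equivalently, the natural map a ⊗_{A⁺} M⁺ → M⁺ is injective. -/

import Mathlib

/-!
Since `a` is proper and every element outside `A⁺` is a unit, `a ⊆ A⁺`, so the ideal
`a ∩ A⁺` of `A⁺` is `a` itself. Composed with `M⁺ → A ⊗_{A⁺} M⁺`, the multiplication map
`a ⊗_{A⁺} M⁺ → M⁺` becomes `a ⊗_{A⁺} M⁺ → A ⊗_{A⁺} M⁺`, which is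
`a ⊗_A (A ⊗_{A⁺} M⁺) → A ⊗_A (A ⊗_{A⁺} M⁺)` after cancelling the base change, and this is
injective by flatness of `A ⊗_{A⁺} M⁺` over `A`.
-/

open TensorProduct

section BaseChange

variable {R A : Type*} [CommRing R] [CommRing A] [Algebra R A]
  {M : Type*} [AddCommGroup M] [Module R M]
  {N P : Type*} [AddCommGroup N] [Module A N] [Module R N] [IsScalarTower R A N]
  [AddCommGroup P] [Module A P] [Module R P] [IsScalarTower R A P]

theorem LinearMap.rTensor_restrictScalars_eq_cancelBaseChange (f : N →ₗ[A] P) :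
    (f.restrictScalars R).rTensor M =
      (AlgebraTensorModule.cancelBaseChange R A A P M).toLinearMap.restrictScalars R ∘ₗ
        (f.rTensor (A ⊗[R] M)).restrictScalars R ∘ₗ
          (AlgebraTensorModule.cancelBaseChange R A A N M).symm.toLinearMap.restrictScalars R := by
  ext n m
  simp

theorem LinearMap.rTensor_restrictScalars_injective_of_flat_baseChange
    [Module.Flat A (A ⊗[R] M)] {f : N →ₗ[A] P} (hf : Function.Injective f) :
    Function.Injective ((f.restrictScalars R).rTensor M) := by
  rw [rTensor_restrictScalars_eq_cancelBaseChange]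
  exact (AlgebraTensorModule.cancelBaseChange R A A P M).injective.comp <|
    (Module.Flat.rTensor_preserves_injective_linearMap f hf).comp
      (AlgebraTensorModule.cancelBaseChange R A A N M).symm.injective

theorem TensorProduct.mk_one_comp_lift_lsmul (I : Ideal R) :
    TensorProduct.mk R A M 1 ∘ₗ TensorProduct.lift ((LinearMap.lsmul R M).comp I.subtype) =
      (Algebra.linearMap R A ∘ₗ I.subtype).rTensor M := by
  ext x m
  simp [smul_tmul', Algebra.algebraMap_eq_smul_one]

end BaseChange

theorem Ideal.coe_subset_of_forall_notMem_isUnit {A : Type*} [CommRing A] {S : Subring A}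
    (hS : ∀ x : A, x ∉ S → IsUnit x) {a : Ideal A} (ha : a ≠ ⊤) : (a : Set A) ⊆ S := by
  intro x hx
  by_contra hxS
  exact ha (a.eq_top_of_isUnit_mem hx (hS x hxS))

def Ideal.comapSubringEquiv {A : Type*} [CommRing A] (S : Subring A) (a : Ideal A)
    (h : (a : Set A) ⊆ S) : a.comap (algebraMap S A) ≃ₗ[S] a where
  toFun x := ⟨(x : S), x.2⟩
  map_add' _ _ := rfl
  map_smul' _ _ := rfl
  invFun y := ⟨⟨y, h y.2⟩, y.2⟩
  left_inv _ := rfl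
  right_inv _ := rfl

theorem statement1 {A : Type*} [CommRing A] (Aplus : Subring A)
    (hpair : ∀ x : A, x ∉ Aplus → ∃ y ∈ Aplus, x * y = 1)
    (a : Ideal A) (ha : a ≠ ⊤)
    (Mplus : Type*) [AddCommGroup Mplus] [Module ↥Aplus Mplus]
    (hflat : Module.Flat A (TensorProduct ↥Aplus A Mplus)) :
    Function.Injective
      (TensorProduct.lift ((LinearMap.lsmul ↥Aplus Mplus).comp
        (Ideal.comap (algebraMap ↥Aplus A) a).subtype)) := by
  have ha_le : (a : Set A) ⊆ Aplus := Ideal.coe_subset_of_forall_notMem_isUnit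
    (fun x hx ↦ let ⟨y, _, hxy⟩ := hpair x hx; IsUnit.of_mul_eq_one y hxy) ha
  let e := Ideal.comapSubringEquiv Aplus a ha_le
  have hfactor : Algebra.linearMap Aplus A ∘ₗ (a.comap (algebraMap Aplus A)).subtype =
      a.subtype.restrictScalars Aplus ∘ₗ e.toLinearMap := rfl
  refine Function.Injective.of_comp (f := TensorProduct.mk Aplus A Mplus 1) ?_
  rw [← LinearMap.coe_comp, TensorProduct.mk_one_comp_lift_lsmul, hfactor, LinearMap.rTensor_comp,
    LinearMap.coe_comp]
  exact (LinearMap.rTensor_restrictScalars_injective_of_flat_baseChange a.injective_subtype).comp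
    (e.rTensor Mplus).injective
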